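/- Let a be an integer and ρ a complex root of f_a. Then -1 - 1/ρ = -ρ^2 + a·ρ + (a+2). In particular all roots of f_a lie in ℤ[ρ], and ℤ[ρ] = ℤ[-1 - 1/ρ]. -/

import Mathlib

/-!
The simplest cubics are permuted by the Möbius map `x ↦ -1 - 1/x` of order three. Since
`x · (x² - a x - (a + 3)) = 1` for a root `x`, this map agrees on roots with the integral
polynomial `σ(x) = -x² + a x + (a + 2)`, so the roots are `ρ, σ ρ, σ (σ ρ)`, all in `ℤ[ρ]`, and
`ρ = σ (σ (σ ρ)) ∈ ℤ[σ ρ]`.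
-/

namespace SimplestCubic

variable {R : Type*} [CommRing R]

def eval (a x : R) : R := x ^ 3 - a * x ^ 2 - (a + 3) * x - 1

def conj (a x : R) : R := -x ^ 2 + a * x + (a + 2)

theorem neg_one_sub_inv_eq_conj {K : Type*} [Field K] {a x : K} (h : eval a x = 0) :
    -1 - x⁻¹ = conj a x := by
  rw [eval] at h
  have hinv : x⁻¹ = -(conj a x + 1) :=
    inv_eq_of_mul_eq_one_right (by rw [conj]; linear_combination h)
  rw [hinv]
  ring

theorem conj_conj {a x : R} (h : eval a x = 0) :
    conj a (conj a x) = x ^ 2 - (a + 1) * x - 2 := by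
  rw [eval] at h
  rw [conj, conj]
  linear_combination (a - x) * h

theorem conj_conj_conj {a x : R} (h : eval a x = 0) : conj a (conj a (conj a x)) = x := by
  rw [eval] at h
  rw [conj_conj h, conj]
  linear_combination (a + 2 - x) * h

theorem eval_eq_mul {a x : R} (h : eval a x = 0) (z : R) :
    eval a z = (z - x) * (z - conj a x) * (z - conj a (conj a x)) := by
  rw [eval] at h
  rw [conj_conj h, eval, conj]
  linear_combination (-x ^ 2 + a * x + x * z + x - a * z - z + 1) * h

theorem eq_or_eq_conj_or_eq_conj_conj [IsDomain R] {a x z : R} (hx : eval a x = 0)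
    (hz : eval a z = 0) : z = x ∨ z = conj a x ∨ z = conj a (conj a x) := by
  rw [eval_eq_mul hx, mul_eq_zero, mul_eq_zero, sub_eq_zero, sub_eq_zero, sub_eq_zero] at hz
  exact or_assoc.mp hz

theorem conj_mem {S : Type*} [SetLike S R] [SubringClass S R] {s : S} {x : R} (hx : x ∈ s)
    (a : ℤ) : conj (a : R) x ∈ s := by
  have ha : (a : R) ∈ s := intCast_mem s a
  exact add_mem (add_mem (neg_mem (pow_mem hx 2)) (mul_mem ha hx))
    (add_mem ha (ofNat_mem s 2))

theorem mem_adjoin_of_eval_eq_zero [IsDomain R] (a : ℤ) {x z : R} (hx : eval (a : R) x = 0)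
    (hz : eval (a : R) z = 0) : z ∈ Algebra.adjoin ℤ {x} := by
  have hmem := Algebra.self_mem_adjoin_singleton ℤ x
  rcases eq_or_eq_conj_or_eq_conj_conj hx hz with rfl | rfl | rfl
  exacts [hmem, conj_mem hmem a, conj_mem (conj_mem hmem a) a]

theorem adjoin_conj (a : ℤ) {x : R} (hx : eval (a : R) x = 0) :
    Algebra.adjoin ℤ {conj (a : R) x} = Algebra.adjoin ℤ {x} := by
  have hconj := Algebra.self_mem_adjoin_singleton ℤ (conj (a : R) x)
  have hx' : x ∈ Algebra.adjoin ℤ {conj (a : R) x} := by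
    simpa only [conj_conj_conj hx] using conj_mem (conj_mem hconj a) a
  exact le_antisymm
    (Algebra.adjoin_singleton_le (conj_mem (Algebra.self_mem_adjoin_singleton ℤ x) a))
    (Algebra.adjoin_singleton_le hx')

end SimplestCubic

open SimplestCubic in
/-- Let `a` be an integer and `ρ` a complex root of `f_a`. Then
`-1 - 1/ρ = -ρ^2 + a·ρ + (a+2)`; in particular all roots of `f_a` lie in `ℤ[ρ]`, and
`ℤ[ρ] = ℤ[-1 - 1/ρ]`. -/
theorem simplest_cubic_conjugate_in_Zrho (a : ℤ) (ρ : ℂ)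
    (hρ : ρ ^ 3 - (a : ℂ) * ρ ^ 2 - ((a : ℂ) + 3) * ρ - 1 = 0) :
    -1 - 1/ρ = -ρ ^ 2 + (a : ℂ) * ρ + ((a : ℂ) + 2) ∧
    (∀ z : ℂ, z ^ 3 - (a : ℂ) * z ^ 2 - ((a : ℂ) + 3) * z - 1 = 0 →
      z ∈ Algebra.adjoin ℤ ({ρ} : Set ℂ)) ∧
    Algebra.adjoin ℤ ({ρ} : Set ℂ) = Algebra.adjoin ℤ ({-1 - 1/ρ} : Set ℂ) := by
  have h : eval (a : ℂ) ρ = 0 := hρ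
  rw [one_div, neg_one_sub_inv_eq_conj h]
  exact ⟨rfl, fun z hz => mem_adjoin_of_eval_eq_zero a h hz, (adjoin_conj a h).symm⟩
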